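/- Let μ be the measure on [0,1] given by μ = (1 - min{α,β})·δ₀ + max{α+β-1, 0}·δ₁ + f(x)dx, where f(x) = √((r₊-x)(x-r₋)) / (2π x(1-x)) on [r₋, r₊] and 0 elsewhere, with r_± = α+β-2αβ ± 2√(αβ(1-α)(1-β)) and α,β ∈ (0,1). Then μ is a probability measure, i.e. its total mass is 1. -/

import Mathlib

open MeasureTheory

/-- `r₋ = α+β-2αβ - 2√(αβ(1-α)(1-β))`. -/
noncomputable def rminus (α β : ℝ) : ℝ :=
  α + β - 2 * α * β - 2 * Real.sqrt (α * β * (1 - α) * (1 - β))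

/-- `r₊ = α+β-2αβ + 2√(αβ(1-α)(1-β))`. -/
noncomputable def rplus (α β : ℝ) : ℝ :=
  α + β - 2 * α * β + 2 * Real.sqrt (α * β * (1 - α) * (1 - β))

/-- Density of the absolutely continuous part of the free Jacobi measure:
`√((r₊-x)(x-r₋)) / (2πx(1-x))` on `[r₋, r₊]`, and `0` elsewhere. -/
noncomputable def jacobiDensity (α β : ℝ) (x : ℝ) : ℝ :=
  Set.indicator (Set.Icc (rminus α β) (rplus α β))
    (fun y => Real.sqrt ((rplus α β - y) * (y - rminus α β)) / (2 * Real.pi * y * (1 - y))) x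

/-- The free Jacobi measure
`μ = (1 - min{α,β}) δ₀ + max{α+β-1,0} δ₁ + jacobiDensity(x) dx`. -/
noncomputable def freeJacobi (α β : ℝ) : Measure ℝ :=
  ENNReal.ofReal (1 - min α β) • Measure.dirac 0 +
  ENNReal.ofReal (max (α + β - 1) 0) • Measure.dirac 1 +
  volume.withDensity (fun x => ENNReal.ofReal (jacobiDensity α β x))

/-!
With `m = (r₊ + r₋) / 2` and `c = (r₊ - r₋) / 2`, the substitution `x = m + c sin θ` turns
`√((r₊ - x)(x - r₋)) dx` into `c² cos² θ dθ`, and `1 / (x(1 - x)) = 1 / x + 1 / (1 - x)` splits the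
density into two integrals `∫ cos² θ / (m ± c sin θ) dθ = π (m - √(m² - c²)) / c²` over
`(-π/2, π/2)`. Since `m² - c² = (α - β)²` and `(1 - m)² - c² = (α + β - 1)²`, the absolutely
continuous part has mass `(1 - |α - β| - |α + β - 1|) / 2`, exactly what the two atoms leave over.
-/

open Set Real

namespace FreeJacobi
variable {m c : ℝ}

theorem one_sub_min_add_max_add_half_eq_one (α β : ℝ) :
    (1 - min α β) + max (α + β - 1) 0 + (1 - |α - β| - |α + β - 1|) / 2 = 1 := by
  rcases le_total α β with h | h <;> rcases le_total (α + β) 1 with h' | h' <;>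
    simp [h, h', abs_of_nonneg, abs_of_nonpos] <;> linarith

theorem abs_sub_add_abs_add_sub_one_le_one {α β : ℝ} (hα : α ∈ Icc (0 : ℝ) 1)
    (hβ : β ∈ Icc (0 : ℝ) 1) : |α - β| + |α + β - 1| ≤ 1 := by
  obtain ⟨hα₀, hα₁⟩ := hα
  obtain ⟨hβ₀, hβ₁⟩ := hβ
  rcases le_total α β with h | h <;> rcases le_total (α + β) 1 with h' | h' <;>
    simp [abs_of_nonneg, abs_of_nonpos, h, h'] <;> linarith

theorem hasDerivAt_sqrt_mul_arcsin (hc : 0 ≤ c) (hcm : c ≤ m) {θ : ℝ}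
    (hθ : θ ∈ Ioo (-(π / 2)) (π / 2)) :
    HasDerivAt (fun θ => √(m ^ 2 - c ^ 2) * arcsin ((c + m * sin θ) / (m + c * sin θ)))
      ((m ^ 2 - c ^ 2) / (m + c * sin θ)) θ := by
  rcases hcm.eq_or_lt with rfl | hlt
  · simpa using hasDerivAt_const θ (0 : ℝ)
  have hd : 0 < m ^ 2 - c ^ 2 := by nlinarith
  have hcos : 0 < cos θ := cos_pos_of_mem_Ioo hθ
  have hq : 0 < m + c * sin θ := by nlinarith [neg_one_le_sin θ, sin_le_one θ]
  have hsq : 1 - ((c + m * sin θ) / (m + c * sin θ)) ^ 2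
      = (√(m ^ 2 - c ^ 2) * cos θ / (m + c * sin θ)) ^ 2 := by
    rw [div_pow, div_pow, mul_pow, sq_sqrt hd.le, cos_sq']
    field_simp
    ring
  have hpos : 0 < 1 - ((c + m * sin θ) / (m + c * sin θ)) ^ 2 := by
    rw [hsq]; positivity
  have hg : HasDerivAt (fun θ => (c + m * sin θ) / (m + c * sin θ))
      ((m * cos θ * (m + c * sin θ) - (c + m * sin θ) * (c * cos θ)) / (m + c * sin θ) ^ 2) θ :=
    (((hasDerivAt_sin θ).const_mul m).const_add c).div
      (((hasDerivAt_sin θ).const_mul c).const_add m) hq.ne'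
  have harcsin := ((hasDerivAt_arcsin (by nlinarith) (by nlinarith)).comp θ hg).const_mul
    √(m ^ 2 - c ^ 2)
  refine harcsin.congr_deriv ?_
  rw [hsq, sqrt_sq (by positivity)]
  field_simp
  ring

theorem continuous_sqrt_mul_arcsin (hc : 0 ≤ c) (hcm : c ≤ m) :
    Continuous (fun θ => √(m ^ 2 - c ^ 2) * arcsin ((c + m * sin θ) / (m + c * sin θ))) := by
  rcases hcm.eq_or_lt with rfl | hlt
  · simpa using continuous_const
  refine continuous_const.mul (continuous_arcsin.comp ?_)
  refine (continuous_const.add (continuous_const.mul continuous_sin)).div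
    (continuous_const.add (continuous_const.mul continuous_sin)) fun θ => ?_
  nlinarith [neg_one_le_sin θ, sin_le_one θ]

-- From `c² cos² θ = (m + c sin θ)(m - c sin θ) - (m² - c²)`; for `c = m` the arcsin term drops out.
noncomputable def cosSqDivPrimitive (m c θ : ℝ) : ℝ :=
  m * θ / c ^ 2 + cos θ / c
    - √(m ^ 2 - c ^ 2) * arcsin ((c + m * sin θ) / (m + c * sin θ)) / c ^ 2

theorem continuous_cosSqDivPrimitive (hc : 0 ≤ c) (hcm : c ≤ m) :
    Continuous (cosSqDivPrimitive m c) := by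
  have := continuous_sqrt_mul_arcsin hc hcm
  unfold cosSqDivPrimitive
  fun_prop

theorem hasDerivAt_cosSqDivPrimitive (hc : 0 < c) (hcm : c ≤ m) {θ : ℝ}
    (hθ : θ ∈ Ioo (-(π / 2)) (π / 2)) :
    HasDerivAt (cosSqDivPrimitive m c) (cos θ ^ 2 / (m + c * sin θ)) θ := by
  have hq : 0 < m + c * sin θ := by
    have := (mapsTo_sin_Ioo hθ).1
    nlinarith
  have h := ((((hasDerivAt_id θ).const_mul m).div_const (c ^ 2)).add
    ((hasDerivAt_cos θ).div_const c)).sub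
    ((hasDerivAt_sqrt_mul_arcsin hc.le hcm hθ).div_const (c ^ 2))
  unfold cosSqDivPrimitive
  refine h.congr_deriv ?_
  field_simp
  rw [cos_sq']
  ring

theorem intervalIntegrable_cos_sq_div_add_mul_sin (hc : 0 < c) (hcm : c ≤ m) :
    IntervalIntegrable (fun θ => cos θ ^ 2 / (m + c * sin θ)) volume (-(π / 2)) (π / 2) := by
  have hle : -(π / 2) ≤ π / 2 := by linarith [pi_pos]
  refine intervalIntegral.intervalIntegrable_deriv_of_nonneg
    (continuous_cosSqDivPrimitive hc.le hcm).continuousOn ?_ fun θ hθ => ?_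
  · intro θ hθ
    rw [min_eq_left hle, max_eq_right hle] at hθ
    exact hasDerivAt_cosSqDivPrimitive hc hcm hθ
  · have := neg_one_le_sin θ
    have : 0 ≤ m + c * sin θ := by nlinarith
    positivity

theorem integral_cos_sq_div_add_mul_sin (hc : 0 < c) (hcm : c ≤ m) :
    ∫ θ in -(π / 2)..π / 2, cos θ ^ 2 / (m + c * sin θ) = π * (m - √(m ^ 2 - c ^ 2)) / c ^ 2 := by
  rw [intervalIntegral.integral_eq_sub_of_hasDerivAt_of_le (by linarith [pi_pos])
    (continuous_cosSqDivPrimitive hc.le hcm).continuousOn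
    (fun θ hθ => hasDerivAt_cosSqDivPrimitive hc hcm hθ)
    (intervalIntegrable_cos_sq_div_add_mul_sin hc hcm)]
  have htop : arcsin ((c + m * sin (π / 2)) / (m + c * sin (π / 2))) = π / 2 := by
    rw [sin_pi_div_two, mul_one, mul_one, add_comm, div_self (by linarith), arcsin_one]
  have hbot : √(m ^ 2 - c ^ 2) * arcsin ((c + m * sin (-(π / 2))) / (m + c * sin (-(π / 2))))
      = -(√(m ^ 2 - c ^ 2) * (π / 2)) := by
    rcases hcm.eq_or_lt with rfl | hlt
    · simp
    rw [sin_neg, sin_pi_div_two, show (c + m * -1) / (m + c * -1) = -1 by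
      rw [div_eq_iff (by linarith)]; ring, arcsin_neg_one, mul_neg]
  simp only [cosSqDivPrimitive, htop, hbot, cos_pi_div_two, cos_neg]
  field_simp
  ring

theorem integral_cos_sq_div_sub_mul_sin (hc : 0 < c) (hcm : c ≤ m) :
    ∫ θ in -(π / 2)..π / 2, cos θ ^ 2 / (m - c * sin θ) = π * (m - √(m ^ 2 - c ^ 2)) / c ^ 2 := by
  have h := intervalIntegral.integral_comp_neg (a := -(π / 2)) (b := π / 2)
    (fun θ => cos θ ^ 2 / (m + c * sin θ))
  simp only [cos_neg, sin_neg, neg_neg, mul_neg, ← sub_eq_add_neg] at h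
  rw [h, integral_cos_sq_div_add_mul_sin hc hcm]

theorem intervalIntegrable_cos_sq_div_sub_mul_sin (hc : 0 < c) (hcm : c ≤ m) :
    IntervalIntegrable (fun θ => cos θ ^ 2 / (m - c * sin θ)) volume (-(π / 2)) (π / 2) := by
  have h := (IntervalIntegrable.iff_comp_neg).1 (intervalIntegrable_cos_sq_div_add_mul_sin hc hcm)
  simp only [cos_neg, sin_neg, neg_neg, mul_neg, ← sub_eq_add_neg] at h
  exact h.symm

theorem image_mul_sin_add_Icc (hc : 0 < c) :
    (fun θ => c * sin θ + m) '' Icc (-(π / 2)) (π / 2) = Icc (m - c) (m + c) := by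
  rw [show (fun θ => c * sin θ + m) = (c * · + m) ∘ sin from rfl, image_comp,
    bijOn_sin.image_eq, image_affine_Icc' hc]
  congr 1 <;> ring

theorem lintegral_sqrt_div_mul_one_sub (hc : 0 < c) (hcm : c ≤ m) (hcm' : c ≤ 1 - m) :
    ∫⁻ x in Icc (m - c) (m + c),
        ENNReal.ofReal (√((m + c - x) * (x - (m - c))) / (2 * π * x * (1 - x)))
      = ENNReal.ofReal ((1 - √(m ^ 2 - c ^ 2) - √((1 - m) ^ 2 - c ^ 2)) / 2) := by
  set F : ℝ → ℝ := fun θ => c ^ 2 / (2 * π) *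
    (cos θ ^ 2 / (m + c * sin θ) + cos θ ^ 2 / ((1 - m) - c * sin θ)) with hF
  have hderiv : ∀ θ ∈ Icc (-(π / 2)) (π / 2),
      HasDerivWithinAt (fun θ => c * sin θ + m) (c * cos θ) (Icc (-(π / 2)) (π / 2)) θ :=
    fun θ _ => (((hasDerivAt_sin θ).const_mul c).add_const m).hasDerivWithinAt
  have hinj : InjOn (fun θ => c * sin θ + m) (Icc (-(π / 2)) (π / 2)) := fun x hx y hy hxy =>
    injOn_sin hx hy (mul_left_cancel₀ hc.ne' (add_right_cancel hxy))
  -- `x = m + c sin θ` gives `√((m + c - x)(x - (m - c))) = c cos θ`; `1/(x(1-x)) = 1/x + 1/(1-x)`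
  have hsubst : ∀ θ ∈ Ioo (-(π / 2)) (π / 2), ENNReal.ofReal |c * cos θ| *
      ENNReal.ofReal (√((m + c - (c * sin θ + m)) * (c * sin θ + m - (m - c)))
        / (2 * π * (c * sin θ + m) * (1 - (c * sin θ + m)))) = ENNReal.ofReal (F θ) := by
    intro θ hθ
    obtain ⟨hs₁, hs₂⟩ := mapsTo_sin_Ioo hθ
    have hcos := cos_pos_of_mem_Ioo hθ
    have hsq : (m + c - (c * sin θ + m)) * (c * sin θ + m - (m - c)) = (c * cos θ) ^ 2 := by
      rw [mul_pow, cos_sq']; ring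
    have h₀ : 0 < m + c * sin θ := by nlinarith
    have h₁ : 0 < 1 - m - c * sin θ := by nlinarith
    rw [← ENNReal.ofReal_mul (abs_nonneg _), hsq, sqrt_sq (by positivity),
      abs_of_pos (by positivity), hF]
    have h₀' : c * sin θ + m ≠ 0 := by linarith
    have h₁' : 1 - (c * sin θ + m) ≠ 0 := by linarith
    congr 1
    field_simp
    ring
  have hFint : IntegrableOn F (Ioo (-(π / 2)) (π / 2)) :=
    (((intervalIntegrable_cos_sq_div_add_mul_sin hc hcm).add
      (intervalIntegrable_cos_sq_div_sub_mul_sin hc hcm')).const_mul _).1.mono_set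
      Ioo_subset_Ioc_self
  have hFnonneg : ∀ θ ∈ Ioo (-(π / 2)) (π / 2), 0 ≤ F θ := by
    intro θ hθ
    obtain ⟨hs₁, hs₂⟩ := mapsTo_sin_Ioo hθ
    have h₀ : 0 < m + c * sin θ := by nlinarith
    have h₁ : 0 < 1 - m - c * sin θ := by nlinarith
    positivity
  rw [← image_mul_sin_add_Icc hc,
    lintegral_image_eq_lintegral_abs_deriv_mul measurableSet_Icc hderiv hinj,
    setLIntegral_congr Ioo_ae_eq_Icc.symm, setLIntegral_congr_fun measurableSet_Ioo hsubst,
    ← ofReal_integral_eq_lintegral_ofReal hFint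
      ((ae_restrict_iff' measurableSet_Ioo).2 (ae_of_all _ hFnonneg)),
    ← integral_Ioc_eq_integral_Ioo, ← intervalIntegral.integral_of_le (by linarith [pi_pos]),
    hF, intervalIntegral.integral_const_mul,
    intervalIntegral.integral_add (intervalIntegrable_cos_sq_div_add_mul_sin hc hcm)
      (intervalIntegrable_cos_sq_div_sub_mul_sin hc hcm'),
    integral_cos_sq_div_add_mul_sin hc hcm, integral_cos_sq_div_sub_mul_sin hc hcm']
  congr 1
  field_simp
  ring

theorem lintegral_ofReal_jacobiDensity {α β : ℝ} (hα : α ∈ Ioo (0 : ℝ) 1)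
    (hβ : β ∈ Ioo (0 : ℝ) 1) :
    ∫⁻ x, ENNReal.ofReal (jacobiDensity α β x)
      = ENNReal.ofReal ((1 - |α - β| - |α + β - 1|) / 2) := by
  obtain ⟨hα₀, hα₁⟩ := hα
  obtain ⟨hβ₀, hβ₁⟩ := hβ
  set m := α + β - 2 * α * β
  set c := 2 * √(α * β * (1 - α) * (1 - β))
  have hc : 0 < c := by
    have : 0 < α * β * (1 - α) * (1 - β) := by
      have := sub_pos.2 hα₁; have := sub_pos.2 hβ₁; positivity
    positivity
  have hc2 : c ^ 2 = 4 * (α * β * (1 - α) * (1 - β)) := by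
    rw [mul_pow, sq_sqrt (by have := sub_pos.2 hα₁; have := sub_pos.2 hβ₁; positivity)]; ring
  have hm : m ^ 2 - c ^ 2 = (α - β) ^ 2 := by rw [hc2]; ring
  have hm' : (1 - m) ^ 2 - c ^ 2 = (α + β - 1) ^ 2 := by rw [hc2]; ring
  have hcm : c ≤ m := abs_le_of_sq_le_sq' (by nlinarith) (by nlinarith) |>.2
  have hcm' : c ≤ 1 - m := abs_le_of_sq_le_sq' (by nlinarith) (by nlinarith) |>.2
  have hdens : (fun x => ENNReal.ofReal (jacobiDensity α β x)) = (Icc (m - c) (m + c)).indicator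
      fun x => ENNReal.ofReal (√((m + c - x) * (x - (m - c))) / (2 * π * x * (1 - x))) :=
    (indicator_comp_of_zero ENNReal.ofReal_zero).symm
  rw [hdens, lintegral_indicator measurableSet_Icc, lintegral_sqrt_div_mul_one_sub hc hcm hcm',
    hm, hm', sqrt_sq_eq_abs, sqrt_sq_eq_abs]

end FreeJacobi

/-- For `α, β ∈ (0,1)`, the free Jacobi measure is a probability measure. -/
theorem stmt18 (α β : ℝ) (hα : α ∈ Set.Ioo (0:ℝ) 1) (hβ : β ∈ Set.Ioo (0:ℝ) 1) :
    IsProbabilityMeasure (freeJacobi α β) := by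
  have hmin : 0 ≤ 1 - min α β := sub_nonneg.2 ((min_le_left _ _).trans hα.2.le)
  have hmax : 0 ≤ max (α + β - 1) 0 := le_max_right _ _
  have hac : 0 ≤ (1 - |α - β| - |α + β - 1|) / 2 := by
    linarith [FreeJacobi.abs_sub_add_abs_add_sub_one_le_one (Ioo_subset_Icc_self hα)
      (Ioo_subset_Icc_self hβ)]
  constructor
  simp only [freeJacobi, Measure.add_apply, Measure.smul_apply, measure_univ, smul_eq_mul,
    mul_one, withDensity_apply _ MeasurableSet.univ, Measure.restrict_univ,
    FreeJacobi.lintegral_ofReal_jacobiDensity hα hβ]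
  rw [← ENNReal.ofReal_add hmin hmax, ← ENNReal.ofReal_add (add_nonneg hmin hmax) hac,
    FreeJacobi.one_sub_min_add_max_add_half_eq_one, ENNReal.ofReal_one]
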